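/- The formal power series g_c(x) = ∑_{n≥0} (∑_{k=0}^{n} C(n,k)^3) x^n (the generating function of the Franel numbers) satisfies, as an identity of formal power series in z, g_c(z^3) = (1 + 2z + 4z^2)^{-1} · g_c(z·(1 − z + z^2)/(1 + 2z + 4z^2)). -/

import Mathlib

/-!
The Franel numbers satisfy `(n + 1)² F(n + 1) = (7n² + 7n + 2) F(n) + 8n² F(n - 1)` (creative
telescoping), so `gc` is annihilated by the second order operator
`θ² - X(7θ² + 7θ + 2) - 8X²(θ + 1)²`, where `θ = X d/dX`. By the chain rule, both `gc(X³)` and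
`(1 + 2X + 4X²)⁻¹ gc(X(1 - X + X²)/(1 + 2X + 4X²))` are annihilated by the operator obtained
from it by `X ↦ X³`. That operator has the double indicial root `0` at the origin, so a power series
solution is determined by its constant term, and both sides have constant term `1`.
-/

open PowerSeries

/-- Formal composition `f ∘ g` of power series, valid when `g` has zero constant term:
the `n`-th coefficient is `∑_{k=0}^{n} f_k · [z^n] g^k`. -/
noncomputable def psComp (f g : PowerSeries ℚ) : PowerSeries ℚ :=
  PowerSeries.mk fun n =>
    ∑ k ∈ Finset.range (n + 1), (PowerSeries.coeff k f) * PowerSeries.coeff n (g ^ k)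

/-- Generating function of the Franel numbers. -/
noncomputable def gc : PowerSeries ℚ :=
  PowerSeries.mk fun n => ∑ k ∈ Finset.range (n + 1), (n.choose k : ℚ) ^ 3

open Finset

@[simp]
theorem Derivation.map_ofNat {R A M : Type*} [CommSemiring R] [CommSemiring A] [Algebra R A]
    [AddCommMonoid M] [Module A M] [Module R M] (D : Derivation R A M) (n : ℕ) [n.AtLeastTwo] :
    D (no_index (OfNat.ofNat n : A)) = 0 := by
  rw [← Nat.cast_ofNat, D.map_natCast]

namespace PowerSeries

@[simp]
theorem coeff_ofNat_mul {R : Type*} [CommSemiring R] (c : ℕ) [c.AtLeastTwo] (k : ℕ) (f : R⟦X⟧) :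
    coeff k ((no_index (OfNat.ofNat c) : R⟦X⟧) * f) = OfNat.ofNat c * coeff k f := by
  rw [← map_ofNat C, coeff_C_mul]

section EulerOperator

variable {R : Type*} [CommRing R]

noncomputable def eulerOp (f : R⟦X⟧) : R⟦X⟧ := X * d⁄dX R f

theorem coeff_eulerOp (n : ℕ) (f : R⟦X⟧) : coeff n (eulerOp f) = n * coeff n f := by
  rcases n with _ | n
  · simp [eulerOp]
  · rw [eulerOp, coeff_succ_X_mul, coeff_derivative, mul_comm]
    push_cast
    rfl

theorem X_pow_dvd_eulerOp {n : ℕ} {f : R⟦X⟧} (h : X ^ n ∣ f) : X ^ n ∣ eulerOp f := by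
  rw [X_pow_dvd_iff] at h ⊢
  intro m hm
  rw [coeff_eulerOp, h m hm, mul_zero]

theorem eq_zero_of_eulerOp_eulerOp_eq_X_mul [IsDomain R] [CharZero R] {D S : R⟦X⟧}
    (h0 : constantCoeff D = 0) (hS : ∀ n, X ^ n ∣ D → X ^ n ∣ S)
    (hD : eulerOp (eulerOp D) = X * S) : D = 0 := by
  have hdvd (n : ℕ) : X ^ (n + 1) ∣ D := by
    induction n with
    | zero => simpa using X_dvd_iff.mpr h0
    | succ n ih =>
      have hθ : coeff (n + 1) (eulerOp (eulerOp D)) = 0 := by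
        rw [hD, coeff_succ_X_mul]
        exact X_pow_dvd_iff.mp (hS _ ih) n n.lt_succ_self
      rw [coeff_eulerOp, coeff_eulerOp, ← mul_assoc, mul_eq_zero] at hθ
      rw [X_pow_dvd_iff]
      intro m hm
      rcases Nat.lt_succ_iff_lt_or_eq.mp hm with hm | rfl
      · exact X_pow_dvd_iff.mp ih m hm
      · exact hθ.resolve_left (mul_self_ne_zero.mpr (Nat.cast_ne_zero.mpr n.succ_ne_zero))
  ext n
  simpa using X_pow_dvd_iff.mp (hdvd n) n n.lt_succ_self

end EulerOperator

end PowerSeries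

theorem psComp_eq_subst {f w : ℚ⟦X⟧} (hw : constantCoeff w = 0) : psComp f w = f.subst w := by
  ext n
  rw [psComp, coeff_mk, coeff_subst' (HasSubst.of_constantCoeff_zero' hw),
    finsum_eq_sum_of_support_subset (s := range (n + 1))]
  · rfl
  intro k hk
  contrapose! hk
  obtain ⟨u, rfl⟩ := X_dvd_iff.mpr hw
  rw [Function.notMem_support, mul_pow, coeff_X_pow_mul', if_neg (by simpa using hk), smul_zero]

theorem Nat.cast_choose_succ_right_eq {R : Type*} [CommRing R] (n j : ℕ) :
    (n.choose (j + 1) : R) * (j + 1) = n.choose j * (n - j) := by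
  rcases le_or_gt j n with h | h
  · rw [← Nat.cast_sub h]
    exact_mod_cast congrArg (Nat.cast (R := R)) (Nat.choose_succ_right_eq n j)
  · simp [Nat.choose_eq_zero_of_lt h, Nat.choose_eq_zero_of_lt (Nat.lt_succ_of_lt h)]

def franel (n : ℕ) : ℕ := ∑ k ∈ range (n + 1), n.choose k ^ 3

theorem cast_franel_eq_sum {n M : ℕ} (h : n < M) :
    (franel n : ℚ) = ∑ k ∈ range M, (n.choose k : ℚ) ^ 3 := by
  rw [franel]
  push_cast
  refine sum_subset (range_subset_range.2 h) fun k _ hk => ?_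
  rw [Nat.choose_eq_zero_of_lt (by simpa using hk)]
  simp

/-- `franelSummand n k` is `n + 1` times the Franel recurrence at `n + 1` applied to the summand
`m ↦ C(m, k)³`; Zeilberger's algorithm provides the certificate `franelCert` that makes it
telescope in `k`. -/
def franelSummand (n k : ℕ) : ℚ :=
  (n + 1) * (n + 2) ^ 2 * (n + 2).choose k ^ 3
    - (n + 1) * (7 * (n + 1) ^ 2 + 7 * (n + 1) + 2) * (n + 1).choose k ^ 3
    - 8 * (n + 1) ^ 3 * n.choose k ^ 3

def franelCert (n j : ℕ) : ℚ :=
  n.choose j ^ 3 * (4 * j ^ 3 - 22 * n + 39 * n * (j + 1) - 18 * n * (j + 1) ^ 2 - 32 * n ^ 2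
    + 27 * n ^ 2 * (j + 1) - 14 * n ^ 3)

theorem franelSummand_succ (n j : ℕ) :
    franelSummand n (j + 1) = franelCert (n + 1) (j + 1) - franelCert (n + 1) j := by
  have hc : ((n + 2).choose (j + 1) : ℚ) = (n + 1).choose (j + 1) + (n + 1).choose j := by
    exact_mod_cast (Nat.choose_succ_succ (n + 1) j).trans (add_comm _ _)
  have hd : (n.choose (j + 1) : ℚ) = (n + 1).choose (j + 1) * (n - j) / (n + 1) := by
    have hpascal : ((n + 1).choose (j + 1) : ℚ) = n.choose (j + 1) + n.choose j := by
      exact_mod_cast (Nat.choose_succ_succ n j).trans (add_comm _ _)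
    field_simp
    linear_combination Nat.cast_choose_succ_right_eq (R := ℚ) n j - (n - j : ℚ) * hpascal
  have ha : ((n + 1).choose (j + 1) : ℚ) = (n + 1).choose j * (n + 1 - j) / (j + 1) := by
    have := Nat.cast_choose_succ_right_eq (R := ℚ) (n + 1) j
    push_cast at this
    field_simp
    linear_combination this
  rw [franelSummand, franelCert, franelCert, hc, hd, ha]
  push_cast
  field_simp
  ring

theorem sum_franelSummand (n : ℕ) : ∑ k ∈ range (n + 3), franelSummand n k = 0 := by
  rw [sum_range_succ', sum_congr rfl fun j _ => franelSummand_succ n j, sum_range_sub]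
  simp only [franelSummand, franelCert, Nat.choose_succ_self, Nat.choose_zero_right]
  push_cast
  ring

theorem franel_succ_succ (n : ℕ) :
    (n + 2) ^ 2 * franel (n + 2)
      = (7 * (n + 1) ^ 2 + 7 * (n + 1) + 2) * franel (n + 1) + 8 * (n + 1) ^ 2 * franel n := by
  have key : ((n : ℚ) + 1) * ((n + 2) ^ 2 * franel (n + 2)
      - (7 * (n + 1) ^ 2 + 7 * (n + 1) + 2) * franel (n + 1) - 8 * (n + 1) ^ 2 * franel n) = 0 := by
    rw [← sum_franelSummand n, cast_franel_eq_sum (by omega : n + 2 < n + 3),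
      cast_franel_eq_sum (by omega : n + 1 < n + 3), cast_franel_eq_sum (by omega : n < n + 3)]
    simp only [franelSummand, sum_sub_distrib, ← mul_sum]
    ring
  have : ((n : ℚ) + 2) ^ 2 * franel (n + 2)
      = (7 * (n + 1) ^ 2 + 7 * (n + 1) + 2) * franel (n + 1) + 8 * (n + 1) ^ 2 * franel n := by
    linear_combination (mul_eq_zero.mp key).resolve_left (by positivity)
  exact_mod_cast this

theorem coeff_gc (n : ℕ) : coeff n gc = franel n := by simp [gc, franel]

theorem gc_ode :
    X * (1 - 7 * X - 8 * X ^ 2) * d⁄dX ℚ (d⁄dX ℚ gc) + (1 - 14 * X - 24 * X ^ 2) * d⁄dX ℚ gc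
      = (2 + 8 * X) * gc := by
  have hrec (n : ℕ) : ((n : ℚ) + 2) ^ 2 * franel (n + 2)
      = (7 * (n + 1) ^ 2 + 7 * (n + 1) + 2) * franel (n + 1) + 8 * (n + 1) ^ 2 * franel n := by
    exact_mod_cast franel_succ_succ n
  ext m
  rcases m with _ | _ | _ | m
  all_goals
    simp only [mul_sub, mul_one, sub_mul, mul_assoc, one_mul, mul_add, add_mul, map_add, map_sub,
      sq, coeff_zero_X_mul, coeff_succ_X_mul, coeff_derivative, coeff_gc, coeff_ofNat_mul]
    norm_num [add_assoc]
  · simp [franel, sum_range_succ]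
  · linear_combination hrec 0
  · linear_combination hrec 1
  · have := hrec (m + 2)
    push_cast [add_assoc] at this
    linear_combination this

theorem gc_ode_subst {w : ℚ⟦X⟧} (hw : HasSubst w) :
    w * (1 - 7 * w - 8 * w ^ 2) * (d⁄dX ℚ (d⁄dX ℚ gc)).subst w
        + (1 - 14 * w - 24 * w ^ 2) * (d⁄dX ℚ gc).subst w
      = (2 + 8 * w) * gc.subst w := by
  simpa [← coe_substAlgHom hw, substAlgHom_X, map_ofNat] using congrArg (substAlgHom hw) gc_ode

/-- With `θ = X d/dX`, `X * cubedFranelOp f = θ²f - X³(7θ² + 21θ + 18)f - 8X⁶(θ + 3)²f`: the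
operator of `gc_ode` transported along `X ↦ X³` (so `θ ↦ θ / 3`) and multiplied by `9`. -/
noncomputable def cubedFranelOp (f : ℚ⟦X⟧) : ℚ⟦X⟧ :=
  X * (1 - 7 * X ^ 3 - 8 * X ^ 6) * d⁄dX ℚ (d⁄dX ℚ f) + (1 - 28 * X ^ 3 - 56 * X ^ 6) * d⁄dX ℚ f
    - 18 * X ^ 2 * (1 + 4 * X ^ 3) * f

theorem cubedFranelOp_sub (f g : ℚ⟦X⟧) :
    cubedFranelOp (f - g) = cubedFranelOp f - cubedFranelOp g := by
  simp only [cubedFranelOp, map_sub]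
  ring

theorem eq_zero_of_cubedFranelOp_eq_zero {D : ℚ⟦X⟧} (hD : cubedFranelOp D = 0)
    (h0 : constantCoeff D = 0) : D = 0 := by
  refine eq_zero_of_eulerOp_eulerOp_eq_X_mul h0
    (S := X ^ 2 * (7 * eulerOp (eulerOp D) + 21 * eulerOp D + 18 * D
      + 8 * X ^ 3 * (eulerOp (eulerOp D) + 6 * eulerOp D + 9 * D))) ?_ ?_
  · intro n hn
    have h1 := X_pow_dvd_eulerOp hn
    have h2 := X_pow_dvd_eulerOp h1
    apply Dvd.dvd.mul_left
    apply_rules [dvd_add, Dvd.dvd.mul_left]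
  · rw [cubedFranelOp] at hD
    simp only [eulerOp, Derivation.leibniz, derivative_X, smul_eq_mul]
    linear_combination X * hD

theorem eq_of_cubedFranelOp_eq_zero {f g : ℚ⟦X⟧} (hf : cubedFranelOp f = 0)
    (hg : cubedFranelOp g = 0) (h0 : constantCoeff f = constantCoeff g) : f = g :=
  sub_eq_zero.mp <| eq_zero_of_cubedFranelOp_eq_zero (by rw [cubedFranelOp_sub, hf, hg, sub_zero])
    (by rw [map_sub, h0, sub_self])

theorem cubedFranelOp_subst_X_pow_three : cubedFranelOp (gc.subst (X ^ 3 : ℚ⟦X⟧)) = 0 := by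
  have hw : HasSubst (X ^ 3 : ℚ⟦X⟧) := HasSubst.X_pow three_ne_zero
  simp only [cubedFranelOp, derivative_subst hw, Derivation.leibniz, Derivation.leibniz_pow,
    Derivation.map_ofNat, derivative_X, Nat.add_one_sub_one, pow_one, smul_eq_mul, nsmul_eq_mul,
    Nat.cast_ofNat, mul_one, mul_zero, add_zero]
  linear_combination 9 * X ^ 2 * gc_ode_subst hw

noncomputable def franelDen : ℚ⟦X⟧ := 1 + 2 * X + 4 * X ^ 2

noncomputable def franelSubst : ℚ⟦X⟧ := X * (1 - X + X ^ 2) * franelDen⁻¹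

theorem constantCoeff_franelDen_ne_zero : constantCoeff franelDen ≠ 0 := by
  simp [franelDen]

theorem hasSubst_franelSubst : HasSubst franelSubst :=
  HasSubst.of_constantCoeff_zero' (by simp [franelSubst])

theorem franelSubst_mul_franelDen : franelSubst * franelDen = X * (1 - X + X ^ 2) := by
  rw [franelSubst, mul_assoc, PowerSeries.inv_mul_cancel _ constantCoeff_franelDen_ne_zero, mul_one]

theorem derivative_franelSubst_mul_franelDen_sq :
    d⁄dX ℚ franelSubst * franelDen ^ 2 = 1 - 2 * X - 3 * X ^ 2 + 4 * X ^ 3 + 4 * X ^ 4 := by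
  have hwq := franelSubst_mul_franelDen
  rw [franelDen] at hwq ⊢
  have hd := congrArg (d⁄dX ℚ) hwq
  simp only [Derivation.leibniz, Derivation.leibniz_pow, Derivation.map_one_eq_zero,
    Derivation.map_ofNat, derivative_X, map_add, map_sub, smul_eq_mul, nsmul_eq_mul,
    Nat.add_one_sub_one, pow_one, Nat.cast_ofNat] at hd
  linear_combination (1 + 2 * X + 4 * X ^ 2) * hd - (2 + 8 * X) * hwq

theorem franelDen_sq_mul_derivative_subst (f : ℚ⟦X⟧) :
    franelDen ^ 2 * d⁄dX ℚ (f.subst franelSubst)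
      = (1 - 2 * X - 3 * X ^ 2 + 4 * X ^ 3 + 4 * X ^ 4) * (d⁄dX ℚ f).subst franelSubst := by
  rw [derivative_subst hasSubst_franelSubst, ← derivative_franelSubst_mul_franelDen_sq]
  ring

theorem cubedFranelOp_inv_mul_subst :
    cubedFranelOp (franelDen⁻¹ * gc.subst franelSubst) = 0 := by
  rw [franelDen]
  set q : ℚ⟦X⟧ := 1 + 2 * X + 4 * X ^ 2 with hq_def
  set w := franelSubst
  set N : ℚ⟦X⟧ := 1 - 2 * X - 3 * X ^ 2 + 4 * X ^ 3 + 4 * X ^ 4 with hN_def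
  have hq0 : constantCoeff q ≠ 0 := constantCoeff_franelDen_ne_zero
  set G := gc.subst w
  set G1 := (d⁄dX ℚ gc).subst w
  set G2 := (d⁄dX ℚ (d⁄dX ℚ gc)).subst w
  set B := q⁻¹ * G
  have hwq : w * q = X * (1 - X + X ^ 2) := franelSubst_mul_franelDen
  have hG : q ^ 2 * d⁄dX ℚ G = N * G1 := franelDen_sq_mul_derivative_subst gc
  have hG1 : q ^ 2 * d⁄dX ℚ G1 = N * G2 := franelDen_sq_mul_derivative_subst (d⁄dX ℚ gc)
  -- the equation of `gc_ode_subst`, multiplied by `q³`, with `w * q` replaced by `X(1 - X + X²)`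
  have hE : (X * (1 - X + X ^ 2)) * q ^ 2 * G2 - 7 * (X * (1 - X + X ^ 2)) ^ 2 * q * G2
      - 8 * (X * (1 - X + X ^ 2)) ^ 3 * G2 + q ^ 3 * G1 - 14 * (X * (1 - X + X ^ 2)) * q ^ 2 * G1
      - 24 * (X * (1 - X + X ^ 2)) ^ 2 * q * G1 - 2 * q ^ 3 * G
      - 8 * (X * (1 - X + X ^ 2)) * q ^ 2 * G = 0 := by
    linear_combination q ^ 3 * gc_ode_subst hasSubst_franelSubst
      + (-q ^ 2 * G2 + 14 * q ^ 2 * G1 + 8 * q ^ 2 * G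
        + (7 * q * G2 + 24 * q * G1) * (w * q + X * (1 - X + X ^ 2))
        + 8 * G2 * ((w * q) ^ 2 + w * q * (X * (1 - X + X ^ 2)) + (X * (1 - X + X ^ 2)) ^ 2)) * hwq
  have hB : q * B = G := by
    rw [← mul_assoc, PowerSeries.mul_inv_cancel _ hq0, one_mul]
  have hB1 : q ^ 3 * d⁄dX ℚ B = N * G1 - q * (2 + 8 * X) * G := by
    have hd := congrArg (d⁄dX ℚ) hB
    simp only [hq_def, Derivation.leibniz, Derivation.leibniz_pow,
      Derivation.map_one_eq_zero, Derivation.map_ofNat, derivative_X, map_add, smul_eq_mul,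
      nsmul_eq_mul, Nat.add_one_sub_one, pow_one, Nat.cast_ofNat] at hd
    linear_combination q ^ 2 * hd + hG - q * (2 + 8 * X) * hB
  have hB2 : q ^ 5 * d⁄dX ℚ (d⁄dX ℚ B) = N ^ 2 * G2
      + (q ^ 2 * (-2 - 6 * X + 12 * X ^ 2 + 16 * X ^ 3) - 4 * q * (2 + 8 * X) * N) * G1
      + (2 * (2 + 8 * X) ^ 2 * q ^ 2 - 8 * q ^ 3) * G := by
    have hd := congrArg (d⁄dX ℚ) hB1
    simp only [hq_def, hN_def, Derivation.leibniz, Derivation.leibniz_pow,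
      Derivation.map_one_eq_zero, Derivation.map_ofNat, derivative_X, map_add, map_sub,
      smul_eq_mul, nsmul_eq_mul, Nat.add_one_sub_one, pow_one, Nat.cast_ofNat] at hd
    linear_combination q ^ 2 * hd + N * hG1 - q * (2 + 8 * X) * hG - 3 * q * (2 + 8 * X) * hB1
  apply mul_left_cancel₀ (pow_ne_zero 5 (ne_zero_of_map hq0))
  rw [cubedFranelOp, mul_zero]
  linear_combination (X - 7 * X ^ 4 - 8 * X ^ 7) * hB2
    + (1 - 28 * X ^ 3 - 56 * X ^ 6) * q ^ 2 * hB1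
    + (-18 * X ^ 2 - 72 * X ^ 5) * q ^ 4 * hB + q * N * hE

theorem functional_equation_franel :
    psComp gc (X ^ 3)
      = (1 + 2 * X + 4 * X ^ 2 : PowerSeries ℚ)⁻¹
          * psComp gc (X * (1 - X + X ^ 2) * (1 + 2 * X + 4 * X ^ 2)⁻¹) := by
  have h0 : constantCoeff (psComp gc (X ^ 3)) = constantCoeff ((1 + 2 * X + 4 * X ^ 2 : ℚ⟦X⟧)⁻¹
      * psComp gc (X * (1 - X + X ^ 2) * (1 + 2 * X + 4 * X ^ 2)⁻¹)) := by
    simp [psComp]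
  rw [psComp_eq_subst (by simp), psComp_eq_subst (by simp)] at h0 ⊢
  exact eq_of_cubedFranelOp_eq_zero cubedFranelOp_subst_X_pow_three cubedFranelOp_inv_mul_subst h0
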